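/- (Even part of the Laguerre-to-Hermite expansion.) For every nonnegative integer m, ₂F₃(-m, (1-2m)/2; 1/2, 1/2, 1; x²/4) = Σ_{k=0}^{m} ((-2m)_{2k} / (2^{2k} ((2k)!)²)) · ₂F₂((2k-2m)/2, (2k+1-2m)/2; (2k+1)/2, (2k+2)/2; 1/4) · H_{2k}(x), where the ₂F₂ series terminate. -/

import Mathlib

open Finset

/-- Pochhammer (rising factorial) symbol on the reals. -/
noncomputable def poch (a : ℝ) (n : ℕ) : ℝ := ∏ i ∈ Finset.range n, (a + i)

/-- Physicists' Hermite polynomial. -/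
noncomputable def hermiteP (N : ℕ) (x : ℝ) : ℝ :=
  (N.factorial : ℝ) * ∑ k ∈ Finset.range (N / 2 + 1),
    (-1 : ℝ) ^ k * (2 * x) ^ (N - 2 * k) / ((k.factorial : ℝ) * ((N - 2 * k).factorial : ℝ))

/-! Legendre's duplication `(a)_{2n} = 4ⁿ (a/2)_n ((a+1)/2)_n` turns the left side into
`∑ₛ (a)_{2s} x^{2s} / ((2s)!)²` with `a = -2m`, and the `k`-th coefficient on the right into
`∑ⱼ (a)_{2(k+j)} / (4^{k+j} (2k)! (2k+2j)! j!)`. Substituting the inversion formula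
`(2x)^{2s} / (2s)! = ∑_{k ≤ s} H_{2k}(x) / ((2k)! (s-k)!)` on the left and exchanging the two sums
over `k + j = s ≤ m` gives the right side. The inversion formula is the Cauchy product of `e^{-t}` and
`e^{t}` in disguise: after expanding `H_{2k}`, the inner sums are `∑ᵢ (-1)ⁱ / (i! (n-i)!) = [n = 0]`. -/

open scoped Nat

lemma poch_zero (a : ℝ) : poch a 0 = 1 := prod_range_zero _

lemma poch_succ (a : ℝ) (n : ℕ) : poch a (n + 1) = poch a n * (a + n) := prod_range_succ _ _

lemma poch_add (a : ℝ) (m n : ℕ) : poch a (m + n) = poch a m * poch (a + m) n := by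
  simp only [poch, prod_range_add, Nat.cast_add, add_assoc]

lemma poch_pos {a : ℝ} (ha : 0 < a) (n : ℕ) : 0 < poch a n :=
  prod_pos fun i _ => by positivity

lemma poch_one (n : ℕ) : poch 1 n = n ! := by
  induction n with
  | zero => simp [poch_zero]
  | succ n ih => rw [poch_succ, ih, Nat.factorial_succ]; push_cast; ring

lemma factorial_mul_poch_natCast_add_one (k j : ℕ) : (k ! : ℝ) * poch (k + 1) j = (k + j)! := by
  rw [← poch_one, ← poch_one, poch_add, add_comm (1 : ℝ)]

theorem poch_two_mul (a : ℝ) (n : ℕ) :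
    poch a (2 * n) = 4 ^ n * poch (a / 2) n * poch ((a + 1) / 2) n := by
  induction n with
  | zero => simp [poch_zero]
  | succ n ih =>
    rw [show 2 * (n + 1) = 2 * n + 1 + 1 by ring, poch_succ, poch_succ, ih, poch_succ, poch_succ]
    push_cast
    ring

lemma sum_range_neg_one_pow_div_factorial_mul_factorial (n : ℕ) :
    ∑ i ∈ range (n + 1), (-1 : ℝ) ^ i / (i ! * (n - i)!) = if n = 0 then 1 else 0 := by
  have hterm : ∀ i ∈ range (n + 1),
      (-1 : ℝ) ^ i / (i ! * (n - i)!) = (-1) ^ i * n.choose i / n ! := by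
    intro i hi
    have hin : i ≤ n := Nat.lt_succ_iff.mp (mem_range.mp hi)
    have hchoose_ne : (n.choose i : ℝ) ≠ 0 := by exact_mod_cast (Nat.choose_pos hin).ne'
    rw [← Nat.choose_mul_factorial_mul_factorial hin]
    push_cast
    field_simp
  rw [sum_congr rfl hterm, ← sum_div]
  have := congr_arg (Int.cast : ℤ → ℝ) (Int.alternating_sum_range_choose (n := n))
  push_cast at this
  rw [this]
  split_ifs with h <;> simp [h]

lemma hermiteP_two_mul_div_factorial (k : ℕ) (x : ℝ) :
    hermiteP (2 * k) x / (2 * k)! =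
      ∑ i ∈ range (k + 1), (-1) ^ i / i ! * ((2 * x) ^ (2 * (k - i)) / (2 * (k - i))!) := by
  rw [hermiteP, Nat.mul_div_cancel_left k two_pos, mul_div_cancel_left₀ _ (by positivity)]
  refine sum_congr rfl fun i _ => ?_
  rw [← Nat.mul_sub]
  ring

theorem sum_hermiteP_two_mul_div_eq_pow (s : ℕ) (x : ℝ) :
    ∑ k ∈ range (s + 1), hermiteP (2 * k) x / ((2 * k)! * (s - k)!) =
      (2 * x) ^ (2 * s) / (2 * s)! := by
  set g : ℕ → ℝ := fun t => (2 * x) ^ (2 * t) / (2 * t)!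
  calc ∑ k ∈ range (s + 1), hermiteP (2 * k) x / ((2 * k)! * (s - k)!)
      = ∑ k ∈ range (s + 1), ∑ t ∈ range (k + 1),
          g t * ((-1) ^ (k - t) / ((k - t)! * (s - (t + (k - t)))!)) := by
        refine sum_congr rfl fun k hk => ?_
        rw [div_mul_eq_div_div, hermiteP_two_mul_div_factorial, sum_div,
          ← sum_range_reflect]
        refine sum_congr rfl fun t ht => ?_
        have htk : t ≤ k := Nat.lt_succ_iff.mp (mem_range.mp ht)
        rw [add_tsub_cancel_right, Nat.sub_sub_self htk, Nat.add_sub_cancel' htk]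
        ring
    _ = ∑ t ∈ range (s + 1),
          g t * ∑ j ∈ range (s - t + 1), (-1 : ℝ) ^ j / (j ! * (s - t - j)!) := by
        refine (sum_range_diag_flip (s + 1)
          fun t j => g t * ((-1) ^ j / (j ! * (s - (t + j))!))).trans ?_
        refine sum_congr rfl fun t ht => ?_
        rw [mul_sum, Nat.sub_add_comm (Nat.lt_succ_iff.mp (mem_range.mp ht))]
        simp only [Nat.sub_sub]
    _ = g s := by
        simp only [sum_range_neg_one_pow_div_factorial_mul_factorial, Nat.sub_eq_zero_iff_le]
        rw [sum_range_succ, sum_eq_zero fun t ht => by simp [(mem_range.mp ht).not_ge]]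
        simp

lemma hypergeometric_term_eq (a x : ℝ) (s : ℕ) :
    poch (a / 2) s * poch ((a + 1) / 2) s * (x ^ 2 / 4) ^ s /
        (poch (1 / 2) s * poch (1 / 2) s * poch 1 s * s !) =
      poch a (2 * s) / (4 ^ s * (2 * s)!) * ((2 * x) ^ (2 * s) / (2 * s)!) := by
  have hnum := poch_two_mul a s
  have hden : poch 1 (2 * s) = 4 ^ s * poch (1 / 2) s * poch 1 s := by
    rw [poch_two_mul]; norm_num
  rw [poch_one, poch_one] at hden
  have hhalf := (poch_pos (by norm_num : (0 : ℝ) < 1 / 2) s).ne'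
  rw [poch_one, hnum, hden, mul_pow, pow_mul 2 2 s, div_pow, ← pow_mul x 2 s]
  field_simp
  norm_num

lemma hermite_coefficient_term_eq (a : ℝ) (k j : ℕ) :
    poch a (2 * k) / (2 ^ (2 * k) * ((2 * k)! : ℝ) ^ 2) *
        (poch ((a + 2 * k) / 2) j * poch ((a + 2 * k + 1) / 2) j * (1 / 4 : ℝ) ^ j /
          (poch ((2 * k + 1) / 2) j * poch ((2 * k + 2) / 2) j * j !)) =
      poch a (2 * (k + j)) / (4 ^ (k + j) * (2 * (k + j))!) / ((2 * k)! * j !) := by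
  have hsplit : poch a (2 * (k + j)) = poch a (2 * k) * poch (a + 2 * k) (2 * j) := by
    rw [mul_add, poch_add]; push_cast; rfl
  have hfact : ((2 * (k + j))! : ℝ) = (2 * k)! * poch (2 * k + 1) (2 * j) := by
    rw [mul_add, ← factorial_mul_poch_natCast_add_one]; push_cast; rfl
  have hnum := poch_two_mul (a + 2 * k) j
  have hden := poch_two_mul (2 * k + 1) j
  rw [show (2 * k + 1 + 1 : ℝ) = 2 * k + 2 by ring] at hden
  have h1 := (poch_pos (by positivity : (0 : ℝ) < (2 * k + 1) / 2) j).ne'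
  have h2 := (poch_pos (by positivity : (0 : ℝ) < (2 * k + 2) / 2) j).ne'
  rw [hsplit, hfact, hnum, hden, pow_mul, pow_add, one_div_pow]
  field_simp
  ring

theorem sum_hypergeometric_eq_sum_hermiteP (a x : ℝ) (n : ℕ) :
    ∑ s ∈ range (n + 1), poch (a / 2) s * poch ((a + 1) / 2) s * (x ^ 2 / 4) ^ s /
        (poch (1 / 2) s * poch (1 / 2) s * poch 1 s * s !) =
      ∑ k ∈ range (n + 1), poch a (2 * k) / (2 ^ (2 * k) * ((2 * k)! : ℝ) ^ 2) *
        (∑ j ∈ range (n - k + 1),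
          poch ((a + 2 * k) / 2) j * poch ((a + 2 * k + 1) / 2) j * (1 / 4 : ℝ) ^ j /
            (poch ((2 * k + 1) / 2) j * poch ((2 * k + 2) / 2) j * j !)) *
        hermiteP (2 * k) x := by
  set c : ℕ → ℝ := fun s => poch a (2 * s) / (4 ^ s * (2 * s)!)
  set H : ℕ → ℕ → ℝ := fun k j => hermiteP (2 * k) x / ((2 * k)! * j !)
  calc _ = ∑ s ∈ range (n + 1), ∑ k ∈ range (s + 1), c (k + (s - k)) * H k (s - k) := by
        refine sum_congr rfl fun s _ => ?_
        rw [hypergeometric_term_eq, ← sum_hermiteP_two_mul_div_eq_pow, mul_sum]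
        refine sum_congr rfl fun k hk => ?_
        rw [Nat.add_sub_cancel' (Nat.lt_succ_iff.mp (mem_range.mp hk))]
    _ = ∑ k ∈ range (n + 1), ∑ j ∈ range (n - k + 1), c (k + j) * H k j := by
        refine (sum_range_diag_flip (n + 1) fun k j => c (k + j) * H k j).trans ?_
        refine sum_congr rfl fun k hk => ?_
        rw [Nat.sub_add_comm (Nat.lt_succ_iff.mp (mem_range.mp hk))]
    _ = _ := by
        refine sum_congr rfl fun k _ => ?_
        rw [mul_sum, sum_mul]
        refine sum_congr rfl fun j _ => ?_
        rw [hermite_coefficient_term_eq]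
        ring

/-- Even part of the Laguerre-to-Hermite expansion. -/
theorem even_part_laguerre_to_hermite (m : ℕ) (x : ℝ) :
    (∑ s ∈ Finset.range (m + 1),
        poch (-(m : ℝ)) s * poch ((1 - 2 * (m : ℝ)) / 2) s * (x ^ 2 / 4) ^ s /
          (poch (1 / 2) s * poch (1 / 2) s * poch 1 s * (s.factorial : ℝ))) =
      ∑ k ∈ Finset.range (m + 1),
        (poch (-2 * (m : ℝ)) (2 * k) / (2 ^ (2 * k) * (((2 * k).factorial : ℝ)) ^ 2)) *
        (∑ j ∈ Finset.range (m - k + 1),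
          poch ((2 * (k : ℝ) - 2 * m) / 2) j * poch ((2 * (k : ℝ) + 1 - 2 * m) / 2) j *
            (1 / 4 : ℝ) ^ j /
          (poch ((2 * (k : ℝ) + 1) / 2) j * poch ((2 * (k : ℝ) + 2) / 2) j * (j.factorial : ℝ))) *
        hermiteP (2 * k) x := by
  have ha : (-2 * m : ℝ) / 2 = -m := by ring
  have ha' : (-2 * m + 1 : ℝ) / 2 = (1 - 2 * m) / 2 := by ring
  have hk : ∀ k : ℝ, (-2 * m + 2 * k) / 2 = (2 * k - 2 * m) / 2 := fun k => by ring
  have hk' : ∀ k : ℝ, (-2 * m + 2 * k + 1) / 2 = (2 * k + 1 - 2 * m) / 2 := fun k => by ring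
  simpa only [ha, ha', hk, hk'] using sum_hypergeometric_eq_sum_hermiteP (-2 * m) x m
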